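/- Let P be any finite Borel measure on ℝ (not necessarily a probability measure), 1 ≤ p < ∞, and M ≥ 0. Then the set of bounded Borel functions Y : ℝ → ℝ that are differentiable Lebesgue-almost everywhere with |Y'| > M at every point of differentiability is dense in L^p(ℝ, Borel, P). -/

import Mathlib

/-!
Smooth compactly supported functions are dense in `L^p(P)`, so it suffices to perturb such a `g`,
with `|g'| ≤ L`. Adding the sawtooth `η · fract (c x)` with `η c = L + |M| + 1` moves `g` by at most
`η` uniformly, hence arbitrarily little in `L^p` of the finite measure `P`. The result has
derivative `g' + η c`, of modulus `> M`, off the null set `c x ∈ ℤ`, and is discontinuous on it.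
-/

open MeasureTheory Filter Set Topology
open scoped ENNReal

theorem hasDerivAt_fract {x : ℝ} (hx : x ≠ ⌊x⌋) : HasDerivAt Int.fract 1 x := by
  have hmem : x ∈ Ioo (⌊x⌋ : ℝ) (⌊x⌋ + 1) :=
    ⟨(Int.floor_le x).lt_of_ne' hx, Int.lt_floor_add_one x⟩
  have hfract : (· - (⌊x⌋ : ℝ)) =ᶠ[𝓝 x] Int.fract := by
    filter_upwards [isOpen_Ioo.mem_nhds hmem] with y hy
    rw [Int.fract, Int.floor_eq_on_Ico ⌊x⌋ y (Ioo_subset_Ico_self hy)]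
  exact ((hasDerivAt_id x).sub_const _).congr_of_eventuallyEq hfract.symm

theorem not_continuousAt_fract_intCast (n : ℤ) : ¬ ContinuousAt Int.fract (n : ℝ) := by
  intro h
  have hleft : Tendsto Int.fract (𝓝[<] (n : ℝ)) (𝓝 0) := by
    simpa using h.tendsto.mono_left (nhdsWithin_le_nhds (s := Iio (n : ℝ)))
  exact zero_ne_one (tendsto_nhds_unique hleft (tendsto_fract_left' n))

theorem volume_setOf_mul_eq_floor {c : ℝ} (hc : c ≠ 0) :
    volume {x : ℝ | c * x = ⌊c * x⌋} = 0 := by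
  have hsub : {x : ℝ | c * x = ⌊c * x⌋} ⊆ range (fun n : ℤ => (n : ℝ) / c) := fun x hx =>
    ⟨⌊c * x⌋, show (⌊c * x⌋ : ℝ) / c = x by rw [← hx.out, mul_div_cancel_left₀ x hc]⟩
  exact measure_mono_null hsub ((countable_range _).measure_zero _)

noncomputable def sawtooth (η c x : ℝ) : ℝ := η * Int.fract (c * x)

section Sawtooth

variable {g : ℝ → ℝ} {η c x : ℝ}

theorem measurable_sawtooth : Measurable (sawtooth η c) :=
  (measurable_fract.comp (measurable_const_mul c)).const_mul η

theorem norm_sawtooth_le (hη : 0 ≤ η) : ‖sawtooth η c x‖ ≤ η := by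
  rw [sawtooth, norm_mul, Real.norm_of_nonneg hη, Real.norm_of_nonneg (Int.fract_nonneg _)]
  exact mul_le_of_le_one_right hη (Int.fract_lt_one _).le

theorem hasDerivAt_sawtooth (hx : c * x ≠ ⌊c * x⌋) : HasDerivAt (sawtooth η c) (η * c) x := by
  unfold sawtooth
  simpa using ((hasDerivAt_fract hx).comp x ((hasDerivAt_id x).const_mul c)).const_mul η

theorem not_continuousAt_sawtooth (hη : η ≠ 0) (hc : c ≠ 0) (hx : c * x = ⌊c * x⌋) :
    ¬ ContinuousAt (sawtooth η c) x := by
  intro h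
  have hsaw : ContinuousAt (fun y => Int.fract (c * y)) x := by
    simpa [sawtooth, hη] using h.div_const η
  have hfract : ContinuousAt Int.fract (c * x) := by
    simpa [Function.comp_def, mul_div_cancel₀ _ hc] using
      hsaw.comp_of_eq (continuousAt_id.div_const c) (mul_div_cancel_left₀ x hc)
  exact not_continuousAt_fract_intCast _ (hx ▸ hfract)

theorem ae_differentiableAt_add_sawtooth (hg : Differentiable ℝ g) (hc : c ≠ 0) :
    ∀ᵐ x, DifferentiableAt ℝ (g + sawtooth η c) x := by
  refine measure_mono_null (fun x hx => ?_) (volume_setOf_mul_eq_floor hc)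
  by_contra hcx
  exact hx ((hg x).add (hasDerivAt_sawtooth hcx).differentiableAt)

theorem deriv_add_sawtooth (hg : Differentiable ℝ g) (hη : η ≠ 0) (hc : c ≠ 0)
    (hx : DifferentiableAt ℝ (g + sawtooth η c) x) :
    deriv (g + sawtooth η c) x = deriv g x + η * c := by
  by_cases hcx : c * x = ⌊c * x⌋
  · refine absurd ?_ (not_continuousAt_sawtooth hη hc hcx)
    simpa using hx.continuousAt.sub (hg x).continuousAt
  · exact ((hg x).hasDerivAt.add (hasDerivAt_sawtooth hcx)).deriv

end Sawtooth

theorem exists_pos_eLpNorm_lt_of_norm_le {α E : Type*} [MeasurableSpace α] [NormedAddCommGroup E]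
    (μ : Measure α) [IsFiniteMeasure μ] (p : ℝ≥0∞) {ε : ℝ≥0∞} (hε : ε ≠ 0) :
    ∃ δ : ℝ, 0 < δ ∧ ∀ f : α → E, (∀ x, ‖f x‖ ≤ δ) → eLpNorm f p μ < ε := by
  have hμ : μ univ ^ p.toReal⁻¹ ≠ ⊤ :=
    ENNReal.rpow_ne_top_of_nonneg (inv_nonneg.2 ENNReal.toReal_nonneg) (measure_ne_top μ _)
  obtain ⟨δ, hδ, hlt⟩ := ENNReal.exists_nnreal_pos_mul_lt hμ hε
  refine ⟨δ, hδ, fun f hf => (eLpNorm_le_of_ae_bound (ae_of_all _ hf)).trans_lt ?_⟩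
  rwa [ENNReal.ofReal_coe_nnreal, mul_comm]

theorem stmt_14_general (P : Measure ℝ) [IsFiniteMeasure P]
    (p : ℝ) (hp : 1 ≤ p) (M : ℝ)
    (X : ℝ → ℝ) (hX : MemLp X (ENNReal.ofReal p) P)
    (ε : ℝ) (hε : 0 < ε) :
    ∃ Y : ℝ → ℝ, Measurable Y ∧ (∃ C : ℝ, ∀ x, |Y x| ≤ C) ∧
      (∀ᵐ x ∂(volume : Measure ℝ), DifferentiableAt ℝ Y x) ∧
      (∀ x : ℝ, DifferentiableAt ℝ Y x → |deriv Y x| > M) ∧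
      eLpNorm (Y - X) (ENNReal.ofReal p) P < ENNReal.ofReal ε := by
  set q := ENNReal.ofReal p
  have hq : 1 ≤ q := ENNReal.one_le_ofReal.2 hp
  obtain ⟨g, hg_supp, hg_smooth, hXg⟩ :=
    hX.exist_eLpNorm_sub_le ENNReal.ofReal_ne_top hq (half_pos hε)
  obtain ⟨η, hη, hsmall⟩ := exists_pos_eLpNorm_lt_of_norm_le (E := ℝ) P q
    (ENNReal.ofReal_pos.2 (half_pos hε)).ne'
  obtain ⟨B, hB⟩ := hg_supp.exists_bound_of_continuous hg_smooth.continuous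
  obtain ⟨L, hL⟩ := hg_supp.deriv.exists_bound_of_continuous
    (hg_smooth.continuous_deriv (by simp))
  have hL0 : 0 ≤ L := (norm_nonneg _).trans (hL 0)
  set c := (L + |M| + 1) / η
  have hηc : η * c = L + |M| + 1 := mul_div_cancel₀ _ hη.ne'
  have hc : c ≠ 0 := by positivity
  have hg : Differentiable ℝ g := hg_smooth.differentiable (by simp)
  refine ⟨g + sawtooth η c, hg.continuous.measurable.add measurable_sawtooth,
    ⟨B + η, fun x => (abs_add_le _ _).trans (add_le_add (hB x) (norm_sawtooth_le hη.le))⟩,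
    ae_differentiableAt_add_sawtooth hg hc, fun x hx => ?_, ?_⟩
  · rw [deriv_add_sawtooth hg hη.ne' hc hx, hηc]
    have hgx := neg_le_of_abs_le (hL x)
    calc M < deriv g x + (L + |M| + 1) := by linarith [le_abs_self M]
      _ ≤ _ := le_abs_self _
  · rw [add_sub_right_comm]
    calc eLpNorm (g - X + sawtooth η c) q P ≤ eLpNorm (X - g) q P + eLpNorm (sawtooth η c) q P := by
          rw [← eLpNorm_sub_comm]
          exact eLpNorm_add_le (hg.continuous.aestronglyMeasurable.sub hX.1)
            measurable_sawtooth.aestronglyMeasurable hq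
      _ < ENNReal.ofReal (ε / 2) + ENNReal.ofReal (ε / 2) :=
          ENNReal.add_lt_add_of_le_of_lt (hXg.trans_lt ENNReal.ofReal_lt_top).ne hXg
            (hsmall _ fun _ => norm_sawtooth_le hη.le)
      _ = ENNReal.ofReal ε := by
          rw [← ENNReal.ofReal_add (half_pos hε).le (half_pos hε).le, add_halves]

theorem stmt_14 (P : Measure ℝ) [IsFiniteMeasure P]
    (p : ℝ) (hp : 1 ≤ p) (M : ℝ) (hM : 0 ≤ M)
    (X : ℝ → ℝ) (hX : MemLp X (ENNReal.ofReal p) P)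
    (ε : ℝ) (hε : 0 < ε) :
    ∃ Y : ℝ → ℝ, Measurable Y ∧ (∃ C : ℝ, ∀ x, |Y x| ≤ C) ∧
      (∀ᵐ x ∂(volume : Measure ℝ), DifferentiableAt ℝ Y x) ∧
      (∀ x : ℝ, DifferentiableAt ℝ Y x → |deriv Y x| > M) ∧
      eLpNorm (Y - X) (ENNReal.ofReal p) P < ENNReal.ofReal ε :=
  stmt_14_general P p hp M X hX ε hε
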